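/- arXiv:2103.09387 — 3 statements merged into one kernel-verified Lean document; each statement's English description precedes it below -/
import Mathlib

section
/- Let 0 ≤ a < b ≤ 1, 1 ≤ p < ∞, and s ∈ (0,1] with sp > 1. Then there exists a constant C = C(s, p, a, b) > 0 such that for every M > 0 and every Lipschitz function u : [0, M] → ℝ with u(0) = 0, one has ∫₀^M |u(x)|^p / x^{sp} dx ≤ C ∫₀^M ∫_{ax}^{bx} |u(y) - u(x)|^p / x^{sp+1} dy dx. -/
/-!
For `x ∈ (0, M]`, `y ∈ (a x, b x]` and `l ∈ (0, 1)`, convexity of `t ↦ t ^ p` gives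
`|u x| ^ p ≤ l ^ (1 - p) |u y| ^ p + (1 - l) ^ (1 - p) |u y - u x| ^ p`. Averaging in `y` and
integrating against `x ^ (-s p)` bounds the left-hand side `L` by `l ^ (1 - p) θ L` plus a
multiple of the right-hand side, where Tonelli's theorem gives
`θ = (b ^ (s p) - a ^ (s p)) / (s p (b - a))`. By the mean value theorem `θ < 1`, because
`s p > 1` and `b ≤ 1`, so `l` close to `1` makes `l ^ (1 - p) θ < 1`. Finally `L < ∞` because
`u` is Lipschitz with `u 0 = 0` and `s p ≤ p`, so the term `l ^ (1 - p) θ L` can be absorbed.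
-/

open MeasureTheory Set Filter Topology Function
open scoped ENNReal NNReal

theorem Real.add_rpow_le_weighted {p l A B : ℝ} (hp : 1 ≤ p) (hl0 : 0 < l) (hl1 : l < 1)
    (hA : 0 ≤ A) (hB : 0 ≤ B) :
    (A + B) ^ p ≤ l ^ (1 - p) * A ^ p + (1 - l) ^ (1 - p) * B ^ p := by
  have hl1' : 0 < 1 - l := sub_pos.2 hl1
  have h := (convexOn_rpow hp).2 (mem_Ici.2 (div_nonneg hA hl0.le))
    (mem_Ici.2 (div_nonneg hB hl1'.le)) hl0.le hl1'.le (add_sub_cancel l 1)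
  simp only [smul_eq_mul, mul_div_cancel₀ _ hl0.ne', mul_div_cancel₀ _ hl1'.ne',
    Real.div_rpow hA hl0.le, Real.div_rpow hB hl1'.le] at h
  rw [Real.rpow_sub hl0, Real.rpow_sub hl1', Real.rpow_one, Real.rpow_one]
  exact h.trans_eq (by ring)

theorem Real.rpow_sub_rpow_lt_mul_sub {a b r : ℝ} (ha : 0 ≤ a) (hab : a < b) (hb : b ≤ 1)
    (hr : 1 < r) : b ^ r - a ^ r < r * (b - a) := by
  obtain ⟨c, hc, hslope⟩ := exists_hasDerivAt_eq_slope (fun t : ℝ => t ^ r)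
    (fun t => r * t ^ (r - 1)) hab (Real.continuous_rpow_const (by linarith)).continuousOn
    fun t _ => Real.hasDerivAt_rpow_const (Or.inr hr.le)
  have hc1 : c ^ (r - 1) < 1 :=
    Real.rpow_lt_one (ha.trans hc.1.le) (hc.2.trans_le hb) (by linarith)
  rw [eq_div_iff (sub_pos.2 hab).ne'] at hslope
  have hr0 : 0 < r := by linarith
  have hba : 0 < b - a := sub_pos.2 hab
  calc b ^ r - a ^ r = r * c ^ (r - 1) * (b - a) := hslope.symm
    _ < r * 1 * (b - a) := by gcongr
    _ = r * (b - a) := by ring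

theorem exists_rpow_one_sub_mul_lt {D E : ℝ} (hDE : D < E) (p : ℝ) :
    ∃ l, 0 < l ∧ l < 1 ∧ l ^ (1 - p) * D < E := by
  have hlim : Tendsto (fun l : ℝ => l ^ (1 - p) * D) (𝓝[<] 1) (𝓝 D) := by
    have := ((Real.continuousAt_rpow_const 1 (1 - p) (Or.inl one_ne_zero)).mul_const D)
    simpa using this.tendsto.mono_left nhdsWithin_le_nhds
  obtain ⟨l, ⟨hlD, hl0⟩, hl1⟩ := ((hlim.eventually (gt_mem_nhds hDE)).and
    (Ioo_mem_nhdsLT zero_lt_one)).and self_mem_nhdsWithin |>.exists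
  exact ⟨l, hl0.1, hl1, hlD⟩

section ProdSections

variable {α β : Type*} [MeasurableSpace α] [MeasurableSpace β] {μ : Measure α} {ν : Measure β}
  {S : Set (α × β)} {f : α → β → ℝ≥0∞}

theorem setLIntegral_preimage_prodMk_left (hS : MeasurableSet S) (x : α) :
    ∫⁻ y in Prod.mk x ⁻¹' S, f x y ∂ν = ∫⁻ y, S.indicator (uncurry f) (x, y) ∂ν := by
  rw [← lintegral_indicator (measurable_prodMk_left hS)]
  simp only [← indicator_comp_right]
  rfl

theorem setLIntegral_preimage_prodMk_right (hS : MeasurableSet S) (y : β) :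
    ∫⁻ x in (·, y) ⁻¹' S, f x y ∂μ = ∫⁻ x, S.indicator (uncurry f) (x, y) ∂μ := by
  rw [← lintegral_indicator (measurable_prodMk_right hS)]
  simp only [← indicator_comp_right]
  rfl

theorem Measurable.setLIntegral_preimage_prodMk_left [SFinite ν] (hS : MeasurableSet S)
    (hf : Measurable (uncurry f)) : Measurable fun x => ∫⁻ y in Prod.mk x ⁻¹' S, f x y ∂ν := by
  simp_rw [_root_.setLIntegral_preimage_prodMk_left (f := f) hS]
  exact (hf.indicator hS).lintegral_prod_right'

theorem lintegral_setLIntegral_preimage_prodMk_swap [SFinite μ] [SFinite ν]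
    (hS : MeasurableSet S) (hf : Measurable (uncurry f)) :
    ∫⁻ x, ∫⁻ y in Prod.mk x ⁻¹' S, f x y ∂ν ∂μ = ∫⁻ y, ∫⁻ x in (·, y) ⁻¹' S, f x y ∂μ ∂ν := by
  simp_rw [setLIntegral_preimage_prodMk_left (f := f) hS,
    setLIntegral_preimage_prodMk_right (f := f) hS]
  exact lintegral_lintegral_swap ((hf.indicator hS).comp measurable_id).aemeasurable

end ProdSections

theorem ENNReal.le_ofReal_div_sub_mul_of_mul_le {L R : ℝ≥0∞} {α β γ : ℝ} (hL : L ≠ ∞)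
    (hβ : 0 ≤ β) (hβα : β < α)
    (h : ENNReal.ofReal α * L ≤ ENNReal.ofReal β * L + ENNReal.ofReal γ * R) :
    L ≤ ENNReal.ofReal (γ / (α - β)) * R := by
  have hαβ : 0 < α - β := sub_pos.2 hβα
  have hgap : ENNReal.ofReal (α - β) * L ≤ ENNReal.ofReal γ * R := by
    rw [ENNReal.ofReal_sub _ hβ, ENNReal.sub_mul fun _ _ => hL, tsub_le_iff_left]
    exact h
  rw [ENNReal.ofReal_div_of_pos hαβ, ← ENNReal.mul_div_right_comm,
    ENNReal.le_div_iff_mul_le (Or.inl (ENNReal.ofReal_pos.2 hαβ).ne')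
      (Or.inl ENNReal.ofReal_ne_top), mul_comm]
  exact hgap

theorem setLIntegral_Ioi_rpow_neg_sub_one {r c : ℝ} (hr : 0 < r) (hc : 0 < c) :
    ∫⁻ x in Ioi c, ENNReal.ofReal (x ^ (-r - 1)) = ENNReal.ofReal (c ^ (-r) / r) := by
  rw [← ofReal_integral_eq_lintegral_ofReal (integrableOn_Ioi_rpow_of_lt (by linarith) hc)
      ((ae_restrict_mem measurableSet_Ioi).mono fun x hx => Real.rpow_nonneg (hc.trans hx).le _),
    integral_Ioi_rpow_of_lt (by linarith) hc, sub_add_cancel, neg_div, div_neg, neg_neg]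

theorem setLIntegral_Ioc_rpow_neg_sub_one {r c d : ℝ} (hr : 0 < r) (hc : 0 < c) (hcd : c ≤ d) :
    ∫⁻ x in Ioc c d, ENNReal.ofReal (x ^ (-r - 1)) =
      ENNReal.ofReal ((c ^ (-r) - d ^ (-r)) / r) := by
  have hsplit := lintegral_union (μ := volume) (f := fun x : ℝ => ENNReal.ofReal (x ^ (-r - 1)))
    measurableSet_Ioi (Ioc_disjoint_Ioi_same (a := c) (b := d))
  rw [Ioc_union_Ioi_eq_Ioi hcd, setLIntegral_Ioi_rpow_neg_sub_one hr hc,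
    setLIntegral_Ioi_rpow_neg_sub_one hr (hc.trans_le hcd)] at hsplit
  rw [sub_div, ENNReal.ofReal_sub _ (div_nonneg (Real.rpow_nonneg (hc.le.trans hcd) _) hr.le),
    hsplit, ENNReal.add_sub_cancel_right ENNReal.ofReal_ne_top]

theorem setLIntegral_rpow_neg_sub_one_cone {a b r y : ℝ} (ha : 0 ≤ a) (hab : a < b) (hr : 0 < r)
    (hy : 0 < y) :
    ∫⁻ x in {x | a * x < y ∧ y ≤ b * x}, ENNReal.ofReal (x ^ (-r - 1)) =
      ENNReal.ofReal ((b ^ r - a ^ r) / r * y ^ (-r)) := by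
  have hb : 0 < b := ha.trans_lt hab
  have hyb : (y / b) ^ (-r) = b ^ r * y ^ (-r) := by
    rw [Real.div_rpow hy.le hb.le, Real.rpow_neg hb.le, div_inv_eq_mul, mul_comm]
  rcases ha.eq_or_lt with rfl | ha
  · have hset : {x | 0 * x < y ∧ y ≤ b * x} = Ici (y / b) := by
      ext x; simp [hy, div_le_iff₀ hb, mul_comm]
    rw [hset, ← setLIntegral_congr Ioi_ae_eq_Ici,
      setLIntegral_Ioi_rpow_neg_sub_one hr (div_pos hy hb), hyb, Real.zero_rpow hr.ne']
    ring_nf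
  · have hset : {x | a * x < y ∧ y ≤ b * x} = Ico (y / b) (y / a) := by
      ext x; simp [div_le_iff₀ hb, lt_div_iff₀ ha, mul_comm, and_comm]
    have hya : (y / a) ^ (-r) = a ^ r * y ^ (-r) := by
      rw [Real.div_rpow hy.le ha.le, Real.rpow_neg ha.le, div_inv_eq_mul, mul_comm]
    rw [hset, setLIntegral_congr Ico_ae_eq_Ioc,
      setLIntegral_Ioc_rpow_neg_sub_one hr (div_pos hy hb)
        (div_le_div_of_nonneg_left hy.le ha hab.le),
      hyb, hya]
    ring_nf

theorem setLIntegral_div_rpow_add_one_cone {a b r y : ℝ} (ha : 0 ≤ a) (hab : a < b) (hr : 0 < r)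
    (hy : 0 < y) (t : ℝ) :
    ∫⁻ x in {x | a * x < y ∧ y ≤ b * x}, ENNReal.ofReal (t / x ^ (r + 1)) =
      ENNReal.ofReal ((b ^ r - a ^ r) / r) * ENNReal.ofReal (t / y ^ r) := by
  have hb : 0 < b := ha.trans_lt hab
  have hD : 0 ≤ (b ^ r - a ^ r) / r :=
    div_nonneg (sub_nonneg.2 (Real.rpow_le_rpow ha hab.le hr.le)) hr.le
  have hset : MeasurableSet {x : ℝ | a * x < y ∧ y ≤ b * x} :=
    (measurableSet_lt (measurable_const_mul a) measurable_const).inter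
      (measurableSet_le measurable_const (measurable_const_mul b))
  have hsplit : ∀ x ∈ {x : ℝ | a * x < y ∧ y ≤ b * x},
      ENNReal.ofReal (t / x ^ (r + 1)) = ENNReal.ofReal t * ENNReal.ofReal (x ^ (-r - 1)) := by
    intro x hx
    have hx0 : 0 < x := pos_of_mul_pos_right (hy.trans_le hx.2) hb.le
    rw [← ENNReal.ofReal_mul' (Real.rpow_nonneg hx0.le _), sub_eq_add_neg, ← neg_add,
      Real.rpow_neg hx0.le, div_eq_mul_inv]
  rw [setLIntegral_congr_fun hset hsplit, lintegral_const_mul' _ _ ENNReal.ofReal_ne_top,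
    setLIntegral_rpow_neg_sub_one_cone ha hab hr hy, ENNReal.ofReal_mul hD, mul_left_comm,
    ← ENNReal.ofReal_mul' (Real.rpow_nonneg hy.le _), Real.rpow_neg hy.le, ← div_eq_mul_inv]

theorem measurableSet_setOf_snd_mem_Ioc_mul (a b : ℝ) :
    MeasurableSet {q : ℝ × ℝ | q.2 ∈ Ioc (a * q.1) (b * q.1)} :=
  (measurableSet_lt (measurable_fst.const_mul a) measurable_snd).inter
    (measurableSet_le measurable_snd (measurable_fst.const_mul b))

theorem mem_Ioc_of_mem_Ioc_mul {a b M x y : ℝ} (ha : 0 ≤ a) (hb : b ≤ 1) (hx : x ∈ Ioc 0 M)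
    (hy : y ∈ Ioc (a * x) (b * x)) : y ∈ Ioc 0 M :=
  ⟨(mul_nonneg ha hx.1.le).trans_lt hy.1,
    hy.2.trans ((mul_le_of_le_one_left hx.1.le hb).trans hx.2)⟩

theorem setLIntegral_Ioc_setLIntegral_Ioc_mul_le {a b r M : ℝ} {φ : ℝ → ℝ} (hφ : Measurable φ)
    (ha : 0 ≤ a) (hab : a < b) (hb : b ≤ 1) (hr : 0 < r) :
    ∫⁻ x in Ioc 0 M, ∫⁻ y in Ioc (a * x) (b * x), ENNReal.ofReal (φ y / x ^ (r + 1)) ≤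
      ENNReal.ofReal ((b ^ r - a ^ r) / r) * ∫⁻ y in Ioc 0 M, ENNReal.ofReal (φ y / y ^ r) := by
  have hcone := measurableSet_setOf_snd_mem_Ioc_mul a b
  calc ∫⁻ x in Ioc 0 M, ∫⁻ y in Ioc (a * x) (b * x), ENNReal.ofReal (φ y / x ^ (r + 1))
      = ∫⁻ y, ∫⁻ x in (·, y) ⁻¹' {q : ℝ × ℝ | q.2 ∈ Ioc (a * q.1) (b * q.1)} ∩ Ioc 0 M,
          ENNReal.ofReal (φ y / x ^ (r + 1)) := by
        simp_rw [← Measure.restrict_restrict (measurable_prodMk_right hcone)]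
        exact lintegral_setLIntegral_preimage_prodMk_swap hcone (by fun_prop)
    _ ≤ ∫⁻ y, (Ioc 0 M).indicator
          (fun y => ENNReal.ofReal ((b ^ r - a ^ r) / r) * ENNReal.ofReal (φ y / y ^ r)) y := by
        refine lintegral_mono fun y => ?_
        by_cases hy : y ∈ Ioc 0 M
        · rw [indicator_of_mem hy]
          exact (lintegral_mono_set inter_subset_left).trans_eq
            (setLIntegral_div_rpow_add_one_cone ha hab hr hy.1 _)
        · have hempty : (·, y) ⁻¹' {q : ℝ × ℝ | q.2 ∈ Ioc (a * q.1) (b * q.1)} ∩ Ioc 0 M = ∅ :=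
            eq_empty_of_forall_notMem fun x hx => hy (mem_Ioc_of_mem_Ioc_mul ha hb hx.2 hx.1)
          rw [indicator_of_notMem hy, hempty, Measure.restrict_empty, lintegral_zero_measure]
    _ = ENNReal.ofReal ((b ^ r - a ^ r) / r) * ∫⁻ y in Ioc 0 M, ENNReal.ofReal (φ y / y ^ r) := by
        rw [lintegral_indicator measurableSet_Ioc, lintegral_const_mul' _ _ ENNReal.ofReal_ne_top]

theorem ofReal_sub_mul_abs_rpow_div_le {g : ℝ → ℝ} (hg : Measurable g) {a b p r l x : ℝ}
    (hp : 1 ≤ p) (hl0 : 0 < l) (hl1 : l < 1) (hx : 0 < x) :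
    ENNReal.ofReal (b - a) * ENNReal.ofReal (|g x| ^ p / x ^ r) ≤
      ENNReal.ofReal (l ^ (1 - p)) *
          (∫⁻ y in Ioc (a * x) (b * x), ENNReal.ofReal (|g y| ^ p / x ^ (r + 1))) +
        ENNReal.ofReal ((1 - l) ^ (1 - p)) *
          ∫⁻ y in Ioc (a * x) (b * x), ENNReal.ofReal (|g y - g x| ^ p / x ^ (r + 1)) := by
  have hxr : 0 < x ^ (r + 1) := Real.rpow_pos_of_pos hx _
  have hmean : ENNReal.ofReal (b - a) * ENNReal.ofReal (|g x| ^ p / x ^ r) =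
      ∫⁻ _ in Ioc (a * x) (b * x), ENNReal.ofReal (|g x| ^ p / x ^ (r + 1)) := by
    rw [setLIntegral_const, Real.volume_Ioc, ← ENNReal.ofReal_mul' (by positivity),
      ← ENNReal.ofReal_mul (by positivity), Real.rpow_add_one hx.ne']
    congr 1
    field_simp
  have hpoint : ∀ y, ENNReal.ofReal (|g x| ^ p / x ^ (r + 1)) ≤
      ENNReal.ofReal (l ^ (1 - p)) * ENNReal.ofReal (|g y| ^ p / x ^ (r + 1)) +
        ENNReal.ofReal ((1 - l) ^ (1 - p)) * ENNReal.ofReal (|g y - g x| ^ p / x ^ (r + 1)) := by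
    intro y
    have htri : |g x| ≤ |g y| + |g y - g x| := by
      linarith [abs_sub_abs_le_abs_sub (g x) (g y), abs_sub_comm (g x) (g y)]
    have hconv := (Real.rpow_le_rpow (abs_nonneg _) htri (by linarith)).trans
      (Real.add_rpow_le_weighted hp hl0 hl1 (abs_nonneg (g y)) (abs_nonneg (g y - g x)))
    rw [← ENNReal.ofReal_mul (Real.rpow_nonneg hl0.le _),
      ← ENNReal.ofReal_mul (Real.rpow_nonneg (sub_pos.2 hl1).le _),
      ← ENNReal.ofReal_add (by positivity) (by positivity)]
    refine ENNReal.ofReal_le_ofReal ((div_le_div_of_nonneg_right hconv hxr.le).trans_eq ?_)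
    ring
  rw [hmean, ← lintegral_const_mul' _ _ ENNReal.ofReal_ne_top,
    ← lintegral_const_mul' _ _ ENNReal.ofReal_ne_top, ← lintegral_add_left (by fun_prop)]
  exact lintegral_mono hpoint

theorem LipschitzWith.setLIntegral_abs_rpow_div_rpow_ne_top {g : ℝ → ℝ} {K : ℝ≥0}
    (hg : LipschitzWith K g) (hg0 : g 0 = 0) {p r : ℝ} (hp : 0 ≤ p) (hrp : r ≤ p) (M : ℝ) :
    ∫⁻ x in Ioc 0 M, ENNReal.ofReal (|g x| ^ p / x ^ r) ≠ ∞ := by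
  refine ne_top_of_le_ne_top (b := ∫⁻ _ in Ioc 0 M, ENNReal.ofReal (K ^ p * M ^ (p - r))) ?_
    (setLIntegral_mono' measurableSet_Ioc fun x ⟨hx0, hxM⟩ => ENNReal.ofReal_le_ofReal ?_)
  · rw [setLIntegral_const, Real.volume_Ioc]
    exact ENNReal.mul_ne_top ENNReal.ofReal_ne_top ENNReal.ofReal_ne_top
  have hgx : |g x| ≤ K * x := by
    simpa [Real.dist_eq, hg0, abs_of_pos hx0] using hg.dist_le_mul x 0
  calc |g x| ^ p / x ^ r ≤ (K * x) ^ p / x ^ r := by gcongr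
    _ = K ^ p * x ^ (p - r) := by
        rw [Real.mul_rpow K.coe_nonneg hx0.le, Real.rpow_sub hx0]; ring
    _ ≤ K ^ p * M ^ (p - r) := by gcongr

theorem ofReal_sub_mul_setLIntegral_le {g : ℝ → ℝ} (hg : Measurable g) {a b p r l M : ℝ}
    (ha : 0 ≤ a) (hab : a < b) (hb : b ≤ 1) (hp : 1 ≤ p) (hr : 0 < r) (hl0 : 0 < l) (hl1 : l < 1) :
    ENNReal.ofReal (b - a) * ∫⁻ x in Ioc 0 M, ENNReal.ofReal (|g x| ^ p / x ^ r) ≤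
      ENNReal.ofReal (l ^ (1 - p) * ((b ^ r - a ^ r) / r)) *
          (∫⁻ x in Ioc 0 M, ENNReal.ofReal (|g x| ^ p / x ^ r)) +
        ENNReal.ofReal ((1 - l) ^ (1 - p)) *
          ∫⁻ x in Ioc 0 M, ∫⁻ y in Ioc (a * x) (b * x),
            ENNReal.ofReal (|g y - g x| ^ p / x ^ (r + 1)) := by
  have hmeas : Measurable fun x => ENNReal.ofReal (l ^ (1 - p)) *
      ∫⁻ y in Ioc (a * x) (b * x), ENNReal.ofReal (|g y| ^ p / x ^ (r + 1)) :=
    (Measurable.setLIntegral_preimage_prodMk_left (measurableSet_setOf_snd_mem_Ioc_mul a b)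
      (f := fun x y => ENNReal.ofReal (|g y| ^ p / x ^ (r + 1))) (by fun_prop)).const_mul _
  calc ENNReal.ofReal (b - a) * ∫⁻ x in Ioc 0 M, ENNReal.ofReal (|g x| ^ p / x ^ r)
      = ∫⁻ x in Ioc 0 M, ENNReal.ofReal (b - a) * ENNReal.ofReal (|g x| ^ p / x ^ r) :=
        (lintegral_const_mul' _ _ ENNReal.ofReal_ne_top).symm
    _ ≤ ∫⁻ x in Ioc 0 M, (ENNReal.ofReal (l ^ (1 - p)) *
            (∫⁻ y in Ioc (a * x) (b * x), ENNReal.ofReal (|g y| ^ p / x ^ (r + 1))) +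
          ENNReal.ofReal ((1 - l) ^ (1 - p)) *
            ∫⁻ y in Ioc (a * x) (b * x), ENNReal.ofReal (|g y - g x| ^ p / x ^ (r + 1))) :=
        setLIntegral_mono' measurableSet_Ioc fun x hx =>
          ofReal_sub_mul_abs_rpow_div_le hg hp hl0 hl1 hx.1
    _ = ENNReal.ofReal (l ^ (1 - p)) * (∫⁻ x in Ioc 0 M,
            ∫⁻ y in Ioc (a * x) (b * x), ENNReal.ofReal (|g y| ^ p / x ^ (r + 1))) +
          ENNReal.ofReal ((1 - l) ^ (1 - p)) * ∫⁻ x in Ioc 0 M, ∫⁻ y in Ioc (a * x) (b * x),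
            ENNReal.ofReal (|g y - g x| ^ p / x ^ (r + 1)) := by
        rw [lintegral_add_left hmeas, lintegral_const_mul' _ _ ENNReal.ofReal_ne_top,
          lintegral_const_mul' _ _ ENNReal.ofReal_ne_top]
    _ ≤ _ := by
        rw [ENNReal.ofReal_mul (Real.rpow_nonneg hl0.le _), mul_assoc]
        gcongr
        exact setLIntegral_Ioc_setLIntegral_Ioc_mul_le (by fun_prop) ha hab hb hr

theorem stmt_2_general (a b p s : ℝ) (ha : 0 ≤ a) (hab : a < b) (hb : b ≤ 1)
    (hp : 1 ≤ p) (hs1 : s ≤ 1) (hsp : 1 < s * p) :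
    ∃ C : ℝ, 0 < C ∧ ∀ (M : ℝ), 0 < M → ∀ (u : ℝ → ℝ) (K : NNReal),
      LipschitzOnWith K u (Set.Icc 0 M) → u 0 = 0 →
      (∫⁻ x in Set.Ioc (0:ℝ) M, ENNReal.ofReal (|u x| ^ p / x ^ (s * p))) ≤
        ENNReal.ofReal C *
          ∫⁻ x in Set.Ioc (0:ℝ) M, ∫⁻ y in Set.Ioc (a * x) (b * x),
            ENNReal.ofReal (|u y - u x| ^ p / x ^ (s * p + 1)) := by
  have hr : 0 < s * p := by linarith
  have hD : (b ^ (s * p) - a ^ (s * p)) / (s * p) < b - a := by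
    rw [div_lt_iff₀ hr, mul_comm (b - a)]
    exact Real.rpow_sub_rpow_lt_mul_sub ha hab hb hsp
  obtain ⟨l, hl0, hl1, hlD⟩ := exists_rpow_one_sub_mul_lt hD p
  refine ⟨(1 - l) ^ (1 - p) / ((b - a) - l ^ (1 - p) * ((b ^ (s * p) - a ^ (s * p)) / (s * p))),
    div_pos (Real.rpow_pos_of_pos (sub_pos.2 hl1) _) (sub_pos.2 hlD), ?_⟩
  intro M hM u K hu hu0
  obtain ⟨g, hg, hug⟩ := hu.extend_real
  have hg0 : g 0 = 0 := hug ⟨le_rfl, hM.le⟩ ▸ hu0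
  rw [setLIntegral_congr_fun measurableSet_Ioc fun x hx => by rw [hug (Ioc_subset_Icc_self hx)],
    setLIntegral_congr_fun measurableSet_Ioc fun x hx =>
      setLIntegral_congr_fun measurableSet_Ioc fun y hy => by
        rw [hug (Ioc_subset_Icc_self hx),
          hug (Ioc_subset_Icc_self (mem_Ioc_of_mem_Ioc_mul ha hb hx hy))]]
  refine ENNReal.le_ofReal_div_sub_mul_of_mul_le
    (hg.setLIntegral_abs_rpow_div_rpow_ne_top hg0 (by linarith) (by nlinarith) M)
    (mul_nonneg (Real.rpow_nonneg hl0.le _) ?_) hlD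
    (ofReal_sub_mul_setLIntegral_le hg.continuous.measurable ha hab hb hp hr hl0 hl1)
  exact div_nonneg (sub_nonneg.2 (Real.rpow_le_rpow ha hab.le hr.le)) hr.le

/-- One-dimensional nonlocal Hardy-type inequality: for `0 ≤ a < b ≤ 1`, `p ≥ 1`,
`s ∈ (0,1]` with `sp > 1`, there is `C > 0` such that for every `M > 0` and every
Lipschitz `u : [0,M] → ℝ` with `u 0 = 0`,
`∫₀^M |u x|^p / x^{sp} dx ≤ C ∫₀^M ∫_{ax}^{bx} |u y - u x|^p / x^{sp+1} dy dx`. -/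
theorem stmt_2 (a b p s : ℝ) (ha : 0 ≤ a) (hab : a < b) (hb : b ≤ 1)
    (hp : 1 ≤ p) (hs0 : 0 < s) (hs1 : s ≤ 1) (hsp : 1 < s * p) :
    ∃ C : ℝ, 0 < C ∧ ∀ (M : ℝ), 0 < M → ∀ (u : ℝ → ℝ) (K : NNReal),
      LipschitzOnWith K u (Set.Icc 0 M) → u 0 = 0 →
      (∫⁻ x in Set.Ioc (0:ℝ) M, ENNReal.ofReal (|u x| ^ p / x ^ (s * p))) ≤
        ENNReal.ofReal C *
          ∫⁻ x in Set.Ioc (0:ℝ) M, ∫⁻ y in Set.Ioc (a * x) (b * x),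
            ENNReal.ofReal (|u y - u x| ^ p / x ^ (s * p + 1)) :=
  stmt_2_general a b p s ha hab hb hp hs1 hsp
end

section
/- Let Ω ⊂ ℝ^d be open and bounded, s ∈ (0,1], 1 ≤ p < ∞, ϑ ∈ (0,1], μ = d + ps, and δ(x) = dist(x, ∂Ω). If ψ : Ω → ℝ is Lipschitz with 0 ≤ ψ ≤ 1 and Lipschitz constant L, then there is a constant C depending only on ϑ, s, p, L and diam(Ω) such that for every measurable u : Ω → ℝ, ∫_Ω ∫_{Ω ∩ B(x, ϑδ(x))} |ψ(y)u(y) - ψ(x)u(x)|^p / (ϑδ(x))^μ dy dx ≤ C ( ∫_Ω ∫_{Ω ∩ B(x, ϑδ(x))} |u(y) - u(x)|^p / (ϑδ(x))^μ dy dx + ∫_Ω |u(x)|^p dx ). -/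
open MeasureTheory Metric
open scoped ENNReal

private lemma aux_add_rpow_le (a b p : ℝ) (ha : 0 ≤ a) (hb : 0 ≤ b) (hp : 0 ≤ p) :
    (a + b) ^ p ≤ 2 ^ p * (a ^ p + b ^ p) := by
  have hmax : a + b ≤ 2 * max a b := by
    rcases le_total a b with h | h
    · rw [max_eq_right h]; linarith
    · rw [max_eq_left h]; linarith
  have h1 : (a + b) ^ p ≤ (2 * max a b) ^ p :=
    Real.rpow_le_rpow (by linarith) hmax hp
  have h2 : (2 * max a b) ^ p = 2 ^ p * (max a b) ^ p :=
    Real.mul_rpow (by norm_num) (le_max_of_le_left ha)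
  have h3 : (max a b) ^ p ≤ a ^ p + b ^ p := by
    rcases le_total a b with h | h
    · rw [max_eq_right h]
      have := Real.rpow_nonneg ha p; linarith
    · rw [max_eq_left h]
      have := Real.rpow_nonneg hb p; linarith
  have h4 : (0:ℝ) ≤ 2 ^ p := Real.rpow_nonneg (by norm_num) p
  calc (a + b) ^ p ≤ 2 ^ p * (max a b) ^ p := by rw [← h2]; exact h1
    _ ≤ 2 ^ p * (a ^ p + b ^ p) := by nlinarith

private lemma aux_ball_le (d : ℕ) (x : EuclideanSpace ℝ (Fin d)) (r : ℝ) (hr : 0 ≤ r) :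
    volume (ball x r) ≤
      ENNReal.ofReal (r ^ d) * volume (ball (0 : EuclideanSpace ℝ (Fin d)) 1) := by
  rcases Nat.eq_zero_or_pos d with hd | hd
  · subst hd
    have hsub : Subsingleton (EuclideanSpace ℝ (Fin 0)) := inferInstance
    have h1 : ball x r ⊆ ball (0 : EuclideanSpace ℝ (Fin 0)) 1 := by
      intro y _
      simp [mem_ball, Subsingleton.elim y (0 : EuclideanSpace ℝ (Fin 0))]
    simpa using measure_mono h1
  · haveI : Nonempty (Fin d) := ⟨⟨0, hd⟩⟩
    haveI : Nontrivial (EuclideanSpace ℝ (Fin d)) := inferInstance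
    rw [Measure.addHaar_ball _ _ hr, finrank_euclideanSpace_fin]

set_option maxHeartbeats 2000000 in
/-- Multiplication by a `[0,1]`-valued Lipschitz function is bounded on the
localized nonlocal space on a bounded open set `Ω ⊂ ℝ^d`. -/
theorem stmt_5 (d : ℕ) (Ω : Set (EuclideanSpace ℝ (Fin d))) (hΩo : IsOpen Ω)
    (hΩb : Bornology.IsBounded Ω) (s p ϑ : ℝ) (hs0 : 0 < s) (hs1 : s ≤ 1)
    (hp : 1 ≤ p) (hϑ0 : 0 < ϑ) (hϑ1 : ϑ ≤ 1)
    (ψ : EuclideanSpace ℝ (Fin d) → ℝ) (L : NNReal)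
    (hψ : LipschitzOnWith L ψ Ω) (hψ0 : ∀ x ∈ Ω, 0 ≤ ψ x) (hψ1 : ∀ x ∈ Ω, ψ x ≤ 1) :
    ∃ C : ℝ, 0 < C ∧ ∀ u : EuclideanSpace ℝ (Fin d) → ℝ, Measurable u →
      (∫⁻ x in Ω,
        ∫⁻ y in Ω ∩ Metric.ball x (ϑ * Metric.infDist x Ωᶜ),
          ENNReal.ofReal
            (|ψ y * u y - ψ x * u x| ^ p /
              (ϑ * Metric.infDist x Ωᶜ) ^ ((d : ℝ) + p * s))) ≤
      ENNReal.ofReal C *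
        ((∫⁻ x in Ω,
            ∫⁻ y in Ω ∩ Metric.ball x (ϑ * Metric.infDist x Ωᶜ),
              ENNReal.ofReal
                (|u y - u x| ^ p /
                  (ϑ * Metric.infDist x Ωᶜ) ^ ((d : ℝ) + p * s))) +
          ∫⁻ x in Ω, ENNReal.ofReal (|u x| ^ p)) := by
  have hps : (0:ℝ) ≤ p := le_trans zero_le_one hp
  set L' : ℝ := max 1 (L : ℝ) with hL'def
  have hL'1 : (1:ℝ) ≤ L' := le_max_left _ _
  have hL'0 : (0:ℝ) < L' := lt_of_lt_of_le one_pos hL'1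
  set B : ℝ := 2 ^ p * L' ^ p with hBdef
  have hB0 : 0 < B :=
    mul_pos (Real.rpow_pos_of_pos two_pos p) (Real.rpow_pos_of_pos hL'0 p)
  set W : ℝ≥0∞ := volume (ball (0 : EuclideanSpace ℝ (Fin d)) 1) with hWdef
  have hWt : W ≠ ⊤ := measure_ball_lt_top.ne
  set ω : ℝ := W.toReal with hωdef
  have hω0 : (0:ℝ) ≤ ω := ENNReal.toReal_nonneg
  set C : ℝ := B * max 1 ω with hCdef
  have hC0 : 0 < C := mul_pos hB0 (lt_of_lt_of_le one_pos (le_max_left _ _))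
  refine ⟨C, hC0, ?_⟩
  intro u hu
  set μe : ℝ := (d : ℝ) + p * s with hμedef
  -- key pointwise (in x) bound on the inner integral
  have key : ∀ x ∈ Ω,
      (∫⁻ y in Ω ∩ Metric.ball x (ϑ * Metric.infDist x Ωᶜ),
          ENNReal.ofReal (|ψ y * u y - ψ x * u x| ^ p /
            (ϑ * Metric.infDist x Ωᶜ) ^ μe))
        ≤ ENNReal.ofReal C *
            (∫⁻ y in Ω ∩ Metric.ball x (ϑ * Metric.infDist x Ωᶜ),
              ENNReal.ofReal (|u y - u x| ^ p /
                (ϑ * Metric.infDist x Ωᶜ) ^ μe))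
          + ENNReal.ofReal C * ENNReal.ofReal (|u x| ^ p) := by
    intro x hx
    set R : ℝ := ϑ * Metric.infDist x Ωᶜ with hRdef
    rcases le_or_gt R 0 with hR | hR
    · rw [ball_eq_empty.2 hR]
      simp
    -- pointwise (in y) bound
    have pt : ∀ y ∈ Ω ∩ ball x R,
        ENNReal.ofReal (|ψ y * u y - ψ x * u x| ^ p / R ^ μe)
          ≤ ENNReal.ofReal B * ENNReal.ofReal (|u y - u x| ^ p / R ^ μe)
            + ENNReal.ofReal (B * |u x| ^ p * R ^ (-(d:ℝ))) := by
      intro y hy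
      obtain ⟨hyΩ, hyb⟩ := hy
      have ht : dist y x < R := mem_ball.mp hyb
      have ht0 : (0:ℝ) ≤ dist y x := dist_nonneg
      set a : ℝ := |u y - u x| with hadef
      set c : ℝ := |u x| with hcdef
      set m : ℝ := |ψ y - ψ x| with hmdef
      have ha0 : 0 ≤ a := abs_nonneg _
      have hc0 : 0 ≤ c := abs_nonneg _
      have hm0 : 0 ≤ m := abs_nonneg _
      have hm1 : m ≤ 1 := by
        have h1 := hψ0 y hyΩ; have h2 := hψ1 y hyΩ
        have h3 := hψ0 x hx; have h4 := hψ1 x hx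
        rw [hmdef, abs_le]; constructor <;> linarith
      have hmL : m ≤ (L : ℝ) * dist y x := by
        have := hψ.dist_le_mul y hyΩ x hx
        rwa [Real.dist_eq] at this
      -- m ≤ L' * (dist y x) ^ s
      have hms : m ≤ L' * (dist y x) ^ s := by
        rcases le_or_gt 1 (dist y x) with h | h
        · have h1 : (1:ℝ) ≤ (dist y x) ^ s :=
            Real.one_le_rpow h hs0.le
          nlinarith
        · have hts : dist y x ≤ (dist y x) ^ s := by
            rcases eq_or_lt_of_le ht0 with h0 | h0
            · rw [← h0, Real.zero_rpow hs0.ne']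
            · calc dist y x = (dist y x) ^ (1:ℝ) := (Real.rpow_one _).symm
                _ ≤ (dist y x) ^ s := Real.rpow_le_rpow_of_exponent_ge h0 h.le hs1
          have h1 : (L:ℝ) ≤ L' := le_max_right _ _
          have h2 : (0:ℝ) ≤ (dist y x)^s := Real.rpow_nonneg ht0 s
          nlinarith [hmL, L.coe_nonneg]
      have hdecomp : |ψ y * u y - ψ x * u x| ≤ a + m * c := by
        have heq : ψ y * u y - ψ x * u x = ψ y * (u y - u x) + (ψ y - ψ x) * u x := by
          ring
        rw [heq]
        calc |ψ y * (u y - u x) + (ψ y - ψ x) * u x|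
            ≤ |ψ y * (u y - u x)| + |(ψ y - ψ x) * u x| := abs_add_le _ _
          _ = |ψ y| * a + m * c := by rw [abs_mul, abs_mul]
          _ ≤ a + m * c := by
              have h1 : |ψ y| ≤ 1 := abs_le.2 ⟨by linarith [hψ0 y hyΩ], hψ1 y hyΩ⟩
              nlinarith [abs_nonneg (ψ y)]
      -- numerator bound
      have hXp : |ψ y * u y - ψ x * u x| ^ p ≤ B * a ^ p + B * (c ^ p * R ^ (s * p)) := by
        have h1 : |ψ y * u y - ψ x * u x| ^ p ≤ (a + m * c) ^ p :=
          Real.rpow_le_rpow (abs_nonneg _) hdecomp hps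
        have h2 : (a + m * c) ^ p ≤ 2 ^ p * (a ^ p + (m * c) ^ p) :=
          aux_add_rpow_le _ _ _ ha0 (mul_nonneg hm0 hc0) hps
        have h3 : (m * c) ^ p = m ^ p * c ^ p := Real.mul_rpow hm0 hc0
        have h4 : m ^ p ≤ (L' * (dist y x) ^ s) ^ p := Real.rpow_le_rpow hm0 hms hps
        have h5 : (L' * (dist y x) ^ s) ^ p = L' ^ p * (dist y x) ^ (s * p) := by
          rw [Real.mul_rpow hL'0.le (Real.rpow_nonneg ht0 s), ← Real.rpow_mul ht0]
        have h6 : (dist y x) ^ (s * p) ≤ R ^ (s * p) :=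
          Real.rpow_le_rpow ht0 ht.le (mul_nonneg hs0.le hps)
        have h7 : (0:ℝ) ≤ 2 ^ p := Real.rpow_nonneg (by norm_num) p
        have h8 : (0:ℝ) ≤ L' ^ p := Real.rpow_nonneg hL'0.le p
        have h9 : (0:ℝ) ≤ c ^ p := Real.rpow_nonneg hc0 p
        have h10 : (0:ℝ) ≤ a ^ p := Real.rpow_nonneg ha0 p
        have h11 : (0:ℝ) ≤ m ^ p := Real.rpow_nonneg hm0 p
        have h12 : (1:ℝ) ≤ L' ^ p := Real.one_le_rpow hL'1 hps
        have hRsp : (0:ℝ) ≤ R ^ (s * p) := Real.rpow_nonneg hR.le _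
        have h45 : m ^ p ≤ L' ^ p * R ^ (s * p) := by
          calc m ^ p ≤ (L' * (dist y x) ^ s) ^ p := h4
            _ = L' ^ p * (dist y x) ^ (s * p) := h5
            _ ≤ L' ^ p * R ^ (s * p) := mul_le_mul_of_nonneg_left h6 h8
        have h46 : m ^ p * c ^ p ≤ L' ^ p * R ^ (s * p) * c ^ p :=
          mul_le_mul_of_nonneg_right h45 h9
        rw [h3] at h2
        rw [hBdef]
        have hA : 2 ^ p * a ^ p ≤ 2 ^ p * (L' ^ p * a ^ p) :=
          mul_le_mul_of_nonneg_left (le_mul_of_one_le_left h10 h12) h7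
        have hB2 : 2 ^ p * (m ^ p * c ^ p) ≤ 2 ^ p * (L' ^ p * R ^ (s * p) * c ^ p) :=
          mul_le_mul_of_nonneg_left h46 h7
        nlinarith [h1, h2, hA, hB2]
      -- divide by R ^ μe
      have hRμ : (0:ℝ) < R ^ μe := Real.rpow_pos_of_pos hR _
      have hrw : R ^ (s * p) / R ^ μe = R ^ (-(d:ℝ)) := by
        rw [← Real.rpow_sub hR]
        congr 1
        rw [hμedef]; ring
      have hdiv : |ψ y * u y - ψ x * u x| ^ p / R ^ μe
          ≤ B * (a ^ p / R ^ μe) + B * c ^ p * R ^ (-(d:ℝ)) := by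
        have h1 : |ψ y * u y - ψ x * u x| ^ p / R ^ μe
            ≤ (B * a ^ p + B * (c ^ p * R ^ (s * p))) / R ^ μe :=
          div_le_div_of_nonneg_right hXp hRμ.le
        calc |ψ y * u y - ψ x * u x| ^ p / R ^ μe
            ≤ (B * a ^ p + B * (c ^ p * R ^ (s * p))) / R ^ μe := h1
          _ = B * (a ^ p / R ^ μe) + B * c ^ p * (R ^ (s * p) / R ^ μe) := by
              field_simp
          _ = B * (a ^ p / R ^ μe) + B * c ^ p * R ^ (-(d:ℝ)) := by rw [hrw]
      calc ENNReal.ofReal (|ψ y * u y - ψ x * u x| ^ p / R ^ μe)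
          ≤ ENNReal.ofReal (B * (a ^ p / R ^ μe) + B * |u x| ^ p * R ^ (-(d:ℝ))) := by
            refine ENNReal.ofReal_le_ofReal ?_
            simpa [hcdef, mul_assoc] using hdiv
        _ = ENNReal.ofReal (B * (a ^ p / R ^ μe))
              + ENNReal.ofReal (B * |u x| ^ p * R ^ (-(d:ℝ))) := by
            rw [ENNReal.ofReal_add]
            · positivity
            · positivity
        _ = ENNReal.ofReal B * ENNReal.ofReal (a ^ p / R ^ μe)
              + ENNReal.ofReal (B * |u x| ^ p * R ^ (-(d:ℝ))) := by
            rw [ENNReal.ofReal_mul hB0.le]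
    -- integrate the pointwise bound
    have hmeas : MeasurableSet (Ω ∩ ball x R) :=
      hΩo.measurableSet.inter measurableSet_ball
    have step1 : (∫⁻ y in Ω ∩ ball x R,
          ENNReal.ofReal (|ψ y * u y - ψ x * u x| ^ p / R ^ μe))
        ≤ ∫⁻ y in Ω ∩ ball x R,
            (ENNReal.ofReal B * ENNReal.ofReal (|u y - u x| ^ p / R ^ μe)
              + ENNReal.ofReal (B * |u x| ^ p * R ^ (-(d:ℝ)))) :=
      lintegral_mono_ae (ae_restrict_of_forall_mem hmeas pt)
    have step2 : (∫⁻ y in Ω ∩ ball x R,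
          (ENNReal.ofReal B * ENNReal.ofReal (|u y - u x| ^ p / R ^ μe)
            + ENNReal.ofReal (B * |u x| ^ p * R ^ (-(d:ℝ)))))
        = ENNReal.ofReal B *
            (∫⁻ y in Ω ∩ ball x R, ENNReal.ofReal (|u y - u x| ^ p / R ^ μe))
          + ENNReal.ofReal (B * |u x| ^ p * R ^ (-(d:ℝ))) * volume (Ω ∩ ball x R) := by
      rw [lintegral_add_right _ measurable_const, setLIntegral_const,
        lintegral_const_mul' _ _ ENNReal.ofReal_ne_top]
    -- bound the second term
    have hvol : volume (Ω ∩ ball x R) ≤ ENNReal.ofReal (R ^ d) * W :=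
      le_trans (measure_mono Set.inter_subset_right) (aux_ball_le d x R hR.le)
    have hterm : ENNReal.ofReal (B * |u x| ^ p * R ^ (-(d:ℝ))) * volume (Ω ∩ ball x R)
        ≤ ENNReal.ofReal C * ENNReal.ofReal (|u x| ^ p) := by
      calc ENNReal.ofReal (B * |u x| ^ p * R ^ (-(d:ℝ))) * volume (Ω ∩ ball x R)
          ≤ ENNReal.ofReal (B * |u x| ^ p * R ^ (-(d:ℝ))) * (ENNReal.ofReal (R ^ d) * W) :=
            mul_le_mul_right hvol _
        _ = ENNReal.ofReal (B * |u x| ^ p * R ^ (-(d:ℝ)) * R ^ d) * W := by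
            rw [← mul_assoc, ← ENNReal.ofReal_mul (by positivity)]
        _ = ENNReal.ofReal (B * |u x| ^ p) * W := by
            congr 1
            congr 1
            have hRd : (R : ℝ) ^ d = R ^ ((d:ℝ)) := (Real.rpow_natCast R d).symm
            rw [mul_assoc, hRd, ← Real.rpow_add hR]
            simp
        _ = ENNReal.ofReal (B * |u x| ^ p) * ENNReal.ofReal ω := by
            rw [hωdef, ENNReal.ofReal_toReal hWt]
        _ = ENNReal.ofReal (B * |u x| ^ p * ω) := by
            rw [← ENNReal.ofReal_mul (by positivity)]
        _ ≤ ENNReal.ofReal (C * |u x| ^ p) := by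
            refine ENNReal.ofReal_le_ofReal ?_
            have h1 : (0:ℝ) ≤ |u x| ^ p := Real.rpow_nonneg (abs_nonneg _) p
            have h2 : ω ≤ max 1 ω := le_max_right _ _
            have h3 := mul_le_mul_of_nonneg_left h2 (mul_nonneg hB0.le h1)
            rw [hCdef]; nlinarith [h3]
        _ = ENNReal.ofReal C * ENNReal.ofReal (|u x| ^ p) :=
            ENNReal.ofReal_mul hC0.le
    have hBC : ENNReal.ofReal B ≤ ENNReal.ofReal C := by
      refine ENNReal.ofReal_le_ofReal ?_
      rw [hCdef]
      nlinarith [le_max_left (1:ℝ) ω]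
    calc (∫⁻ y in Ω ∩ ball x R,
          ENNReal.ofReal (|ψ y * u y - ψ x * u x| ^ p / R ^ μe))
        ≤ ENNReal.ofReal B *
            (∫⁻ y in Ω ∩ ball x R, ENNReal.ofReal (|u y - u x| ^ p / R ^ μe))
          + ENNReal.ofReal (B * |u x| ^ p * R ^ (-(d:ℝ))) * volume (Ω ∩ ball x R) :=
          step1.trans_eq step2
      _ ≤ ENNReal.ofReal C *
            (∫⁻ y in Ω ∩ ball x R, ENNReal.ofReal (|u y - u x| ^ p / R ^ μe))
          + ENNReal.ofReal C * ENNReal.ofReal (|u x| ^ p) :=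
          add_le_add (mul_le_mul_left hBC _) hterm
  -- integrate in x
  have hmeasg : Measurable fun x => ENNReal.ofReal C * ENNReal.ofReal (|u x| ^ p) := by
    refine Measurable.const_mul ?_ _
    exact (hu.abs.pow measurable_const).ennreal_ofReal
  calc (∫⁻ x in Ω,
        ∫⁻ y in Ω ∩ Metric.ball x (ϑ * Metric.infDist x Ωᶜ),
          ENNReal.ofReal (|ψ y * u y - ψ x * u x| ^ p /
            (ϑ * Metric.infDist x Ωᶜ) ^ μe))
      ≤ ∫⁻ x in Ω,
          (ENNReal.ofReal C *
            (∫⁻ y in Ω ∩ Metric.ball x (ϑ * Metric.infDist x Ωᶜ),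
              ENNReal.ofReal (|u y - u x| ^ p /
                (ϑ * Metric.infDist x Ωᶜ) ^ μe))
          + ENNReal.ofReal C * ENNReal.ofReal (|u x| ^ p)) :=
        lintegral_mono_ae (ae_restrict_of_forall_mem hΩo.measurableSet key)
    _ = (∫⁻ x in Ω, ENNReal.ofReal C *
            (∫⁻ y in Ω ∩ Metric.ball x (ϑ * Metric.infDist x Ωᶜ),
              ENNReal.ofReal (|u y - u x| ^ p /
                (ϑ * Metric.infDist x Ωᶜ) ^ μe)))
          + ∫⁻ x in Ω, ENNReal.ofReal C * ENNReal.ofReal (|u x| ^ p) :=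
        lintegral_add_right _ hmeasg
    _ = ENNReal.ofReal C *
          (∫⁻ x in Ω,
            ∫⁻ y in Ω ∩ Metric.ball x (ϑ * Metric.infDist x Ωᶜ),
              ENNReal.ofReal (|u y - u x| ^ p /
                (ϑ * Metric.infDist x Ωᶜ) ^ μe))
        + ENNReal.ofReal C * ∫⁻ x in Ω, ENNReal.ofReal (|u x| ^ p) := by
        rw [lintegral_const_mul' _ _ ENNReal.ofReal_ne_top,
          lintegral_const_mul' _ _ ENNReal.ofReal_ne_top]
    _ = ENNReal.ofReal C *
          ((∫⁻ x in Ω,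
            ∫⁻ y in Ω ∩ Metric.ball x (ϑ * Metric.infDist x Ωᶜ),
              ENNReal.ofReal (|u y - u x| ^ p /
                (ϑ * Metric.infDist x Ωᶜ) ^ μe))
          + ∫⁻ x in Ω, ENNReal.ofReal (|u x| ^ p)) := (mul_add _ _ _).symm
end

section
/- Let d ≥ 2, 1 ≤ p < ∞, s ∈ (0,1] with ps > 1, and let Ω = {(x', x_d) : x_d > ζ(x')} be a Lipschitz hypograph with ‖∇ζ‖_∞ ≤ L. Define G_ζ u(x', x_d) = u(x', x_d + ζ(x')) for (x', x_d) ∈ ℝ^d_+. Then there exist σ ∈ (0,1] and a constant C, both depending only on L, d, p, s, such that for every measurable u on Ω: ‖G_ζ u‖_{L^p(ℝ^d_+)} = ‖u‖_{L^p(Ω)} and ∫_{ℝ^d_+} ∫_{B(x, σ x_d)} |G_ζ u(y) - G_ζ u(x)|^p / (σ x_d)^{d+ps} dy dx ≤ C ∫_Ω ∫_{B(x, δ(x))} |u(y) - u(x)|^p / δ(x)^{d+ps} dy dx, where δ(x) = dist(x, ∂Ω). -/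
/-!
The shear `G (x', t) = (x', t + ζ x')` maps the half space onto `Ω = {ζ x' < t}` and preserves
Lebesgue measure, being a translation on every vertical line; this gives the `L^p` identity.
For the max metric of `E × ℝ` the shear is `(1 + L)`-Lipschitz, and since `∂Ω` is the graph of
`ζ`, the distance from `G x` to `∂Ω` lies between `x_d / (1 + L)` and `x_d`. So with
`σ = (1 + L)⁻²` the shear maps `B(x, σ x_d)` into `B(G x, δ(G x))`, while replacing the weight
`(σ x_d)^{-(d+ps)}` by `δ(G x)^{-(d+ps)}` costs at most `(1 + L)^{2(d+ps)}`. Changing variables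
in the outer integral finishes the proof.
-/

open MeasureTheory Metric Set Function Filter Topology
open scoped ENNReal NNReal

theorem MeasureTheory.MeasurePreserving.setLIntegral_comp_le_of_mapsTo {α β : Type*}
    [MeasurableSpace α] [MeasurableSpace β] {μ : Measure α} {ν : Measure β} {f : α → β}
    (hf : MeasurePreserving f μ ν) (he : MeasurableEmbedding f) {s : Set α} {t : Set β}
    (hst : MapsTo f s t) (g : β → ℝ≥0∞) :
    ∫⁻ a in s, g (f a) ∂μ ≤ ∫⁻ b in t, g b ∂ν := by
  rw [hf.setLIntegral_comp_emb he]
  exact lintegral_mono_set hst.image_subset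

theorem div_rpow_mul_le_rpow_mul_div {a c δ t e : ℝ} (ha : 0 ≤ a) (hc : 0 < c) (hδ : 0 < δ)
    (hδt : δ ≤ t) (he : 0 ≤ e) : a / (c⁻¹ * t) ^ e ≤ c ^ e * (a / δ ^ e) := by
  calc a / (c⁻¹ * t) ^ e ≤ a / (c⁻¹ * δ) ^ e := by gcongr
    _ = c ^ e * (a / δ ^ e) := by
      rw [Real.mul_rpow (by positivity) hδ.le, Real.inv_rpow hc.le]
      field_simp

section Shear

variable {E : Type*}

def shear (ζ : E → ℝ) (q : E × ℝ) : E × ℝ := (q.1, q.2 + ζ q.1)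

theorem shear_preimage_setOf_lt (ζ : E → ℝ) :
    shear ζ ⁻¹' {q | ζ q.1 < q.2} = {q | 0 < q.2} := by
  ext q
  simp [shear]

theorem leftInverse_shear_neg (ζ : E → ℝ) : LeftInverse (shear (-ζ)) (shear ζ) := fun q => by
  simp [shear]

theorem measurable_shear [MeasurableSpace E] {ζ : E → ℝ} (hζ : Measurable ζ) :
    Measurable (shear ζ) :=
  measurable_fst.prodMk (measurable_snd.add (hζ.comp measurable_fst))

theorem measurableEmbedding_shear [MeasurableSpace E] {ζ : E → ℝ} (hζ : Measurable ζ) :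
    MeasurableEmbedding (shear ζ) := by
  have hsurj : Surjective (shear ζ) := by
    simpa using (leftInverse_shear_neg (-ζ)).surjective
  exact .of_measurable_inverse (measurable_shear hζ) (hsurj.range_eq ▸ .univ)
    (measurable_shear hζ.neg) (leftInverse_shear_neg ζ)

theorem measurePreserving_shear [MeasurableSpace E] (μ : Measure E) [SFinite μ] {ζ : E → ℝ}
    (hζ : Measurable ζ) : MeasurePreserving (shear ζ) (μ.prod volume) (μ.prod volume) :=
  (MeasurePreserving.id μ).skew_product (g := fun a t => t + ζ a)
    (measurable_snd.add (hζ.comp measurable_fst))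
    (.of_forall fun a => (measurePreserving_add_right volume (ζ a)).map_eq)

theorem frontier_setOf_lt_eq [TopologicalSpace E] {ζ : E → ℝ} (hζ : Continuous ζ) :
    frontier {q : E × ℝ | ζ q.1 < q.2} = {q | ζ q.1 = q.2} := by
  refine (frontier_lt_subset_eq hζ.fst' continuous_snd).antisymm fun q hq => ?_
  have hopen : IsOpen {q : E × ℝ | ζ q.1 < q.2} := isOpen_lt hζ.fst' continuous_snd
  rw [hopen.frontier_eq]
  refine ⟨?_, fun h => (ne_of_lt h) hq⟩
  have hlim : Tendsto (fun t : ℝ => (q.1, q.2 + t)) (𝓝[>] 0) (𝓝 q) := by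
    have hcont : Continuous fun t : ℝ => (q.1, q.2 + t) := by fun_prop
    simpa using (hcont.tendsto 0).mono_left nhdsWithin_le_nhds
  refine mem_closure_of_tendsto hlim (eventually_nhdsWithin_of_forall fun t (ht : 0 < t) => ?_)
  change ζ q.1 < q.2 + t
  linarith [show ζ q.1 = q.2 from hq]

section Metric

variable [PseudoMetricSpace E] {ζ : E → ℝ} {L : ℝ≥0}

theorem lipschitzWith_shear (hζ : LipschitzWith L ζ) : LipschitzWith (1 + L) (shear ζ) :=
  (LipschitzWith.prod_fst.prodMk
    (LipschitzWith.prod_snd.add (hζ.comp LipschitzWith.prod_fst))).weaken (by simp)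

theorem infDist_shear_le (ζ : E → ℝ) {x : E × ℝ} (hx : 0 ≤ x.2) :
    infDist (shear ζ x) {q | ζ q.1 = q.2} ≤ x.2 := by
  have hgraph : (x.1, ζ x.1) ∈ {q : E × ℝ | ζ q.1 = q.2} := rfl
  refine (infDist_le_dist_of_mem hgraph).trans ?_
  simp [shear, Prod.dist_eq, abs_of_nonneg hx, hx]

theorem div_le_infDist_shear (hζ : LipschitzWith L ζ) (x : E × ℝ) :
    x.2 / (1 + L) ≤ infDist (shear ζ x) {q | ζ q.1 = q.2} := by
  have hne : {q : E × ℝ | ζ q.1 = q.2}.Nonempty := ⟨(x.1, ζ x.1), rfl⟩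
  rw [le_infDist hne]
  rintro z (hz : ζ z.1 = z.2)
  rw [Prod.dist_eq]
  rcases le_or_gt (x.2 / (1 + L)) (dist x.1 z.1) with hfar | hnear
  · exact le_max_of_le_left hfar
  refine le_max_of_le_right ?_
  have hζxz : ζ z.1 - ζ x.1 ≤ L * dist x.1 z.1 :=
    (le_abs_self _).trans (by simpa [Real.dist_eq, abs_sub_comm] using hζ.dist_le_mul x.1 z.1)
  calc x.2 / (1 + L) = x.2 - L * (x.2 / (1 + L)) := by field_simp; ring
    _ ≤ x.2 - L * dist x.1 z.1 := by gcongr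
    _ ≤ x.2 + ζ x.1 - z.2 := by linarith
    _ ≤ dist (shear ζ x).2 z.2 := le_abs_self _

theorem mapsTo_shear_ball (hζ : LipschitzWith L ζ) (x : E × ℝ) :
    MapsTo (shear ζ) (ball x (((1 + L : ℝ) ^ 2)⁻¹ * x.2))
      (ball (shear ζ x) (infDist (shear ζ x) {q | ζ q.1 = q.2})) := by
  refine ((lipschitzWith_shear hζ).mapsTo_ball (by positivity) x _).mono_right
    (ball_subset_ball ?_)
  calc ((1 + L : ℝ≥0) : ℝ) * (((1 + L : ℝ) ^ 2)⁻¹ * x.2) = x.2 / (1 + L) := by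
        push_cast; field_simp
    _ ≤ _ := div_le_infDist_shear hζ x

variable [MeasurableSpace E] [OpensMeasurableSpace E]

theorem lintegral_ball_shear_le (μ : Measure E) [SFinite μ] (hζ : LipschitzWith L ζ)
    (g : E × ℝ → ℝ) (hg : ∀ y, 0 ≤ g y) {e : ℝ} (he : 0 ≤ e) {x : E × ℝ} (hx : 0 < x.2) :
    ∫⁻ y in ball x (((1 + L : ℝ) ^ 2)⁻¹ * x.2),
        ENNReal.ofReal (g (shear ζ y) / (((1 + L : ℝ) ^ 2)⁻¹ * x.2) ^ e) ∂(μ.prod volume) ≤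
      ENNReal.ofReal (((1 + L : ℝ) ^ 2) ^ e) *
        ∫⁻ y in ball (shear ζ x) (infDist (shear ζ x) {q | ζ q.1 = q.2}),
          ENNReal.ofReal (g y / infDist (shear ζ x) {q | ζ q.1 = q.2} ^ e) ∂(μ.prod volume) := by
  set K : ℝ := 1 + L
  set δ := infDist (shear ζ x) {q | ζ q.1 = q.2}
  have hδpos : 0 < δ := (div_pos hx (by positivity)).trans_le (div_le_infDist_shear hζ x)
  have hmeas : Measurable ζ := hζ.continuous.measurable
  calc _ ≤ ∫⁻ y in ball x ((K ^ 2)⁻¹ * x.2),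
          ENNReal.ofReal ((K ^ 2) ^ e) * ENNReal.ofReal (g (shear ζ y) / δ ^ e)
            ∂(μ.prod volume) :=
        lintegral_mono fun y => by
          rw [← ENNReal.ofReal_mul (by positivity)]
          exact ENNReal.ofReal_le_ofReal (div_rpow_mul_le_rpow_mul_div (hg _) (by positivity)
            hδpos (infDist_shear_le ζ hx.le) he)
    _ = ENNReal.ofReal ((K ^ 2) ^ e) * ∫⁻ y in ball x ((K ^ 2)⁻¹ * x.2),
          ENNReal.ofReal (g (shear ζ y) / δ ^ e) ∂(μ.prod volume) :=
        lintegral_const_mul' _ _ ENNReal.ofReal_ne_top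
    _ ≤ _ := by
        refine mul_le_mul_right ?_ _
        exact (measurePreserving_shear μ hmeas).setLIntegral_comp_le_of_mapsTo
          (measurableEmbedding_shear hmeas) (mapsTo_shear_ball hζ x) _

end Metric

end Shear

theorem stmt_15_general (n : ℕ) (p s : ℝ) (hsp : 1 < p * s)
    (ζ : EuclideanSpace ℝ (Fin n) → ℝ) (L : NNReal) (hζ : LipschitzWith L ζ) :
    ∃ σ C : ℝ, 0 < σ ∧ σ ≤ 1 ∧ 0 < C ∧
      ∀ u : EuclideanSpace ℝ (Fin n) × ℝ → ℝ, Measurable u →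
        (∫⁻ q in {q : EuclideanSpace ℝ (Fin n) × ℝ | 0 < q.2},
            ENNReal.ofReal (|u (q.1, q.2 + ζ q.1)| ^ p)) =
          (∫⁻ q in {q : EuclideanSpace ℝ (Fin n) × ℝ | ζ q.1 < q.2},
            ENNReal.ofReal (|u q| ^ p)) ∧
        (∫⁻ x in {q : EuclideanSpace ℝ (Fin n) × ℝ | 0 < q.2},
            ∫⁻ y in Metric.ball x (σ * x.2),
              ENNReal.ofReal
                (|u (y.1, y.2 + ζ y.1) - u (x.1, x.2 + ζ x.1)| ^ p /
                  (σ * x.2) ^ ((n : ℝ) + 1 + p * s))) ≤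
          ENNReal.ofReal C *
            ∫⁻ x in {q : EuclideanSpace ℝ (Fin n) × ℝ | ζ q.1 < q.2},
              ∫⁻ y in Metric.ball x
                  (Metric.infDist x
                    (frontier {q : EuclideanSpace ℝ (Fin n) × ℝ | ζ q.1 < q.2})),
                ENNReal.ofReal
                  (|u y - u x| ^ p /
                    (Metric.infDist x
                        (frontier {q : EuclideanSpace ℝ (Fin n) × ℝ | ζ q.1 < q.2})) ^
                      ((n : ℝ) + 1 + p * s)) := by
  have he : 0 ≤ (n : ℝ) + 1 + p * s := by linarith [n.cast_nonneg (α := ℝ)]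
  have hK : 1 ≤ (1 + L : ℝ) ^ 2 := one_le_pow₀ (by simp)
  have hmp : MeasurePreserving (shear ζ) volume volume :=
    measurePreserving_shear volume hζ.continuous.measurable
  have hemb := measurableEmbedding_shear hζ.continuous.measurable
  refine ⟨((1 + L : ℝ) ^ 2)⁻¹, ((1 + L : ℝ) ^ 2) ^ ((n : ℝ) + 1 + p * s), by positivity,
    inv_le_one_of_one_le₀ hK, by positivity, fun u _ => ⟨?_, ?_⟩⟩
  · rw [← shear_preimage_setOf_lt ζ]
    exact hmp.setLIntegral_comp_preimage_emb hemb (fun q => ENNReal.ofReal (|u q| ^ p)) _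
  rw [frontier_setOf_lt_eq hζ.continuous,
    ← hmp.setLIntegral_comp_preimage_emb hemb _ {q | ζ q.1 < q.2}, shear_preimage_setOf_lt,
    ← lintegral_const_mul' _ _ ENNReal.ofReal_ne_top]
  refine setLIntegral_mono' (measurableSet_lt measurable_const measurable_snd) fun x hx => ?_
  exact lintegral_ball_shear_le volume hζ (fun y => |u y - u (shear ζ x)| ^ p)
    (fun _ => by positivity) he hx

/-- Flattening a Lipschitz hypograph `Ω = {(x', x_d) : x_d > ζ(x')} ⊆ ℝ^{d-1} × ℝ`
to the half space via `G_ζ u (x', x_d) = u(x', x_d + ζ(x'))`: the `L^p` norm is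
preserved, and the localized nonlocal seminorm of `G_ζ u` on the half space with
horizon `σ x_d` is bounded by the seminorm of `u` on `Ω` with horizon
`δ(x) = dist(x, ∂Ω)`, for some `σ ∈ (0,1]` and constant `C` depending only on
the Lipschitz constant `L`, `d`, `p`, `s`. -/
theorem stmt_15 (n : ℕ) (hn : 1 ≤ n) (p s : ℝ) (hp : 1 ≤ p) (hs0 : 0 < s)
    (hs1 : s ≤ 1) (hsp : 1 < p * s)
    (ζ : EuclideanSpace ℝ (Fin n) → ℝ) (L : NNReal) (hζ : LipschitzWith L ζ) :
    ∃ σ C : ℝ, 0 < σ ∧ σ ≤ 1 ∧ 0 < C ∧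
      ∀ u : EuclideanSpace ℝ (Fin n) × ℝ → ℝ, Measurable u →
        (∫⁻ q in {q : EuclideanSpace ℝ (Fin n) × ℝ | 0 < q.2},
            ENNReal.ofReal (|u (q.1, q.2 + ζ q.1)| ^ p)) =
          (∫⁻ q in {q : EuclideanSpace ℝ (Fin n) × ℝ | ζ q.1 < q.2},
            ENNReal.ofReal (|u q| ^ p)) ∧
        (∫⁻ x in {q : EuclideanSpace ℝ (Fin n) × ℝ | 0 < q.2},
            ∫⁻ y in Metric.ball x (σ * x.2),
              ENNReal.ofReal
                (|u (y.1, y.2 + ζ y.1) - u (x.1, x.2 + ζ x.1)| ^ p /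
                  (σ * x.2) ^ ((n : ℝ) + 1 + p * s))) ≤
          ENNReal.ofReal C *
            ∫⁻ x in {q : EuclideanSpace ℝ (Fin n) × ℝ | ζ q.1 < q.2},
              ∫⁻ y in Metric.ball x
                  (Metric.infDist x
                    (frontier {q : EuclideanSpace ℝ (Fin n) × ℝ | ζ q.1 < q.2})),
                ENNReal.ofReal
                  (|u y - u x| ^ p /
                    (Metric.infDist x
                        (frontier {q : EuclideanSpace ℝ (Fin n) × ℝ | ζ q.1 < q.2})) ^
                      ((n : ℝ) + 1 + p * s)) :=
  stmt_15_general n p s hsp ζ L hζ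
end
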